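/- (Proposition 1, WMMSE equivalence.) In the instantaneous cluster-wise pseudo-SE setup, let F be a nonempty set of precoder tuples. Then sup_{q̄ ∈ F} Σ_{k∈S} w_k · log(1 + SLINR_k(q̄)) = Σ_{k∈S} w_k − inf { J(ρ, u, q̄) : q̄ ∈ F, u ∈ ℂ^S, ρ ∈ (0,∞)^S }. Moreover, a tuple q̄* ∈ F attains the supremum of the weighted sum pseudo-SE over F if and only if the infimum of J over F × ℂ^S × (0,∞)^S is attained at (ρ*, u*, q̄*) with u*_k = b_k(q̄*)/A_k(q̄*) and ρ*_k = 1 + SLINR_k(q̄*) for every k ∈ S. -/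

import Mathlib

open scoped BigOperators

noncomputable section

variable {S S' : Type*} [Fintype S] [Fintype S'] {n : ℕ}

/-- Effective desired-signal coefficient `b_k(q̄) = ⟪g_k, q̄_k⟫`. -/
def bCoef (g : S → EuclideanSpace ℂ (Fin n)) (q : S → EuclideanSpace ℂ (Fin n)) (k : S) : ℂ :=
  inner ℂ (g k) (q k)

/-- Total received power
`A_k(q̄) = ∑_{j∈S} |⟪g_k, q̄_j⟫|² + ∑_{j∈S'} |⟪g_j, q̄_k⟫|² + σ²`. -/
def Apow (g : S → EuclideanSpace ℂ (Fin n)) (h : S' → EuclideanSpace ℂ (Fin n)) (σ : ℝ)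
    (q : S → EuclideanSpace ℂ (Fin n)) (k : S) : ℝ :=
  (∑ j, ‖(inner ℂ (g k) (q j) : ℂ)‖ ^ 2) + (∑ j, ‖(inner ℂ (h j) (q k) : ℂ)‖ ^ 2) + σ ^ 2

/-- Interference-plus-leakage-plus-noise power `D_k(q̄) = A_k(q̄) - |b_k(q̄)|²`. -/
def Dpow (g : S → EuclideanSpace ℂ (Fin n)) (h : S' → EuclideanSpace ℂ (Fin n)) (σ : ℝ)
    (q : S → EuclideanSpace ℂ (Fin n)) (k : S) : ℝ :=
  Apow g h σ q k - ‖bCoef g q k‖ ^ 2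

/-- The hybrid SLINR `SLINR_k(q̄) = |b_k(q̄)|² / D_k(q̄)`. -/
def slinr (g : S → EuclideanSpace ℂ (Fin n)) (h : S' → EuclideanSpace ℂ (Fin n)) (σ : ℝ)
    (q : S → EuclideanSpace ℂ (Fin n)) (k : S) : ℝ :=
  ‖bCoef g q k‖ ^ 2 / Dpow g h σ q k

/-- Per-user MSE `e_k(u, q̄) = |u|² A_k(q̄) - 2 Re(conj u · b_k(q̄)) + 1`. -/
def mse (g : S → EuclideanSpace ℂ (Fin n)) (h : S' → EuclideanSpace ℂ (Fin n)) (σ : ℝ)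
    (q : S → EuclideanSpace ℂ (Fin n)) (k : S) (u : ℂ) : ℝ :=
  ‖u‖ ^ 2 * Apow g h σ q k - 2 * (starRingEnd ℂ u * bCoef g q k).re + 1

/-- WMMSE objective `J(ρ, u, q̄) = ∑_{k∈S} w_k (ρ_k e_k(u_k, q̄) - log ρ_k)`. -/
def Jobj (g : S → EuclideanSpace ℂ (Fin n)) (h : S' → EuclideanSpace ℂ (Fin n)) (σ : ℝ)
    (w : S → ℝ) (ρ : S → ℝ) (u : S → ℂ) (q : S → EuclideanSpace ℂ (Fin n)) : ℝ :=
  ∑ k, w k * (ρ k * mse g h σ q k (u k) - Real.log (ρ k))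

/-! For fixed precoders `J` decouples over users, and each term is minimised in closed form.
Completing the square, `A_k e_k(u) = |A_k u - b_k|² + D_k`, so `e_k(u) ≥ D_k / A_k = (1 + SLINR_k)⁻¹`
with equality at `u = b_k / A_k`; and `log x ≤ x - 1` gives `ρ e - log ρ ≥ 1 + log e` with equality
at `ρ = e⁻¹`. Hence `J(ρ, u, q̄) ≥ ∑ w_k - ∑ w_k log(1 + SLINR_k(q̄))`, with equality at `(ρ*, u*)`,
and minimising `J` is the same as maximising the weighted sum pseudo-SE. -/

open Finset

theorem Real.one_add_log_le_mul_sub_log {ρ e : ℝ} (hρ : 0 < ρ) (he : 0 < e) :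
    1 + Real.log e ≤ ρ * e - Real.log ρ := by
  have := Real.log_le_sub_one_of_pos (mul_pos hρ he)
  rw [Real.log_mul hρ.ne' he.ne'] at this
  linarith

theorem Complex.mul_quadratic_eq_norm_sq_add (A : ℝ) (u b : ℂ) :
    A * (‖u‖ ^ 2 * A - 2 * (starRingEnd ℂ u * b).re + 1) =
      ‖(A : ℂ) * u - b‖ ^ 2 + (A - ‖b‖ ^ 2) := by
  simp only [Complex.sq_norm, Complex.normSq_apply, Complex.mul_re, Complex.mul_im,
    Complex.sub_re, Complex.sub_im, Complex.ofReal_re, Complex.ofReal_im, Complex.conj_re,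
    Complex.conj_im]
  ring

theorem EReal.coe_sub_coe_sub_cancel (c : ℝ) {x : EReal} (hx : x ≠ ⊥) :
    (c : EReal) - (c - x) = x := by
  induction x using EReal.rec with
  | bot => exact absurd rfl hx
  | coe x => rw [← EReal.coe_sub, ← EReal.coe_sub, sub_sub_cancel]
  | top => simp

theorem EReal.sSup_image_coe_eq_sub_sInf {X : Type*} {F : Set X} (hF : F.Nonempty) (f : X → ℝ)
    (c : ℝ) {T : Set EReal} (hmem : ∀ q ∈ F, ((c - f q : ℝ) : EReal) ∈ T)
    (hlow : ∀ x ∈ T, ∃ q ∈ F, ((c - f q : ℝ) : EReal) ≤ x) :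
    sSup ((fun q => (f q : EReal)) '' F) = c - sInf T := by
  set P := sSup ((fun q => (f q : EReal)) '' F)
  have hfP : ∀ q ∈ F, (f q : EReal) ≤ P := fun q hq => le_sSup ⟨q, hq, rfl⟩
  have hP : P ≠ ⊥ := by
    obtain ⟨q, hq⟩ := hF
    exact ne_bot_of_le_ne_bot (EReal.coe_ne_bot _) (hfP q hq)
  have hPT : (c : EReal) - P ≤ sInf T := le_sInf fun x hx => by
    obtain ⟨q, hq, hqx⟩ := hlow x hx
    exact (EReal.sub_le_sub le_rfl (hfP q hq)).trans hqx
  apply le_antisymm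
  · refine sSup_le ?_
    rintro _ ⟨q, hq, rfl⟩
    calc (f q : EReal) = c - ((c - f q : ℝ) : EReal) := by rw [← EReal.coe_sub, sub_sub_cancel]
      _ ≤ c - sInf T := EReal.sub_le_sub le_rfl (sInf_le (hmem q hq))
  · calc (c : EReal) - sInf T ≤ c - (c - P) := EReal.sub_le_sub le_rfl hPT
      _ = P := EReal.coe_sub_coe_sub_cancel c hP

section WMMSE

variable (g : S → EuclideanSpace ℂ (Fin n)) (h : S' → EuclideanSpace ℂ (Fin n)) {σ : ℝ}
  (q : S → EuclideanSpace ℂ (Fin n)) (k : S)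

theorem Dpow_pos (hσ : 0 < σ) : 0 < Dpow g h σ q k := by
  have hsignal : ‖bCoef g q k‖ ^ 2 ≤ ∑ j, ‖(inner ℂ (g k) (q j) : ℂ)‖ ^ 2 :=
    single_le_sum (f := fun j => ‖(inner ℂ (g k) (q j) : ℂ)‖ ^ 2)
      (fun j _ => sq_nonneg _) (mem_univ k)
  have hleak : 0 ≤ ∑ j, ‖(inner ℂ (h j) (q k) : ℂ)‖ ^ 2 := sum_nonneg fun j _ => sq_nonneg _
  have hnoise : 0 < σ ^ 2 := by positivity
  unfold Dpow Apow
  linarith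

theorem one_add_slinr_pos (hσ : 0 < σ) : 0 < 1 + slinr g h σ q k :=
  add_pos_of_pos_of_nonneg one_pos (div_nonneg (sq_nonneg _) (Dpow_pos g h q k hσ).le)

theorem Apow_pos (hσ : 0 < σ) : 0 < Apow g h σ q k := by
  have := Dpow_pos g h q k hσ
  unfold Dpow at this
  nlinarith [sq_nonneg ‖bCoef g q k‖]

theorem Apow_mul_mse (u : ℂ) :
    Apow g h σ q k * mse g h σ q k u =
      ‖(Apow g h σ q k : ℂ) * u - bCoef g q k‖ ^ 2 + Dpow g h σ q k :=
  Complex.mul_quadratic_eq_norm_sq_add _ u _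

theorem inv_one_add_slinr (hσ : 0 < σ) :
    (1 + slinr g h σ q k)⁻¹ = Dpow g h σ q k / Apow g h σ q k := by
  have hD := (Dpow_pos g h q k hσ).ne'
  rw [slinr, show Apow g h σ q k = Dpow g h σ q k + ‖bCoef g q k‖ ^ 2 by unfold Dpow; ring]
  field_simp

theorem inv_one_add_slinr_le_mse (hσ : 0 < σ) (u : ℂ) :
    (1 + slinr g h σ q k)⁻¹ ≤ mse g h σ q k u := by
  rw [inv_one_add_slinr g h q k hσ, div_le_iff₀' (Apow_pos g h q k hσ), Apow_mul_mse]
  exact le_add_of_nonneg_left (sq_nonneg _)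

theorem mse_div_Apow (hσ : 0 < σ) :
    mse g h σ q k (bCoef g q k / Apow g h σ q k) = (1 + slinr g h σ q k)⁻¹ := by
  have hA := Apow_pos g h q k hσ
  rw [inv_one_add_slinr g h q k hσ, eq_div_iff hA.ne', mul_comm, Apow_mul_mse,
    mul_div_cancel₀ _ (by exact_mod_cast hA.ne'), sub_self, norm_zero]
  ring

theorem one_sub_log_one_add_slinr_le (hσ : 0 < σ) (u : ℂ) {ρ : ℝ} (hρ : 0 < ρ) :
    1 - Real.log (1 + slinr g h σ q k) ≤ ρ * mse g h σ q k u - Real.log ρ := by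
  have hpos : 0 < (1 + slinr g h σ q k)⁻¹ := by
    rw [inv_one_add_slinr g h q k hσ]
    exact div_pos (Dpow_pos g h q k hσ) (Apow_pos g h q k hσ)
  have hle := inv_one_add_slinr_le_mse g h q k hσ u
  calc 1 - Real.log (1 + slinr g h σ q k) = 1 + Real.log (1 + slinr g h σ q k)⁻¹ := by
        rw [Real.log_inv, sub_eq_add_neg]
    _ ≤ 1 + Real.log (mse g h σ q k u) := by gcongr
    _ ≤ ρ * mse g h σ q k u - Real.log ρ :=
        Real.one_add_log_le_mul_sub_log hρ (hpos.trans_le hle)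

theorem sub_sum_log_one_add_slinr_le_Jobj (hσ : 0 < σ) {w : S → ℝ} (hw : ∀ k, 0 ≤ w k)
    (u : S → ℂ) {ρ : S → ℝ} (hρ : ∀ k, 0 < ρ k) :
    ∑ k, w k - ∑ k, w k * Real.log (1 + slinr g h σ q k) ≤ Jobj g h σ w ρ u q := by
  rw [← sum_sub_distrib]
  refine sum_le_sum fun k _ => ?_
  rw [← mul_one_sub]
  exact mul_le_mul_of_nonneg_left (one_sub_log_one_add_slinr_le g h q k hσ (u k) (hρ k)) (hw k)

theorem Jobj_at_optimum (hσ : 0 < σ) (w : S → ℝ) :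
    Jobj g h σ w (fun k => 1 + slinr g h σ q k) (fun k => bCoef g q k / Apow g h σ q k) q =
      ∑ k, w k - ∑ k, w k * Real.log (1 + slinr g h σ q k) := by
  rw [Jobj, ← sum_sub_distrib]
  refine sum_congr rfl fun k _ => ?_
  rw [mse_div_Apow g h q k hσ, mul_inv_cancel₀ (one_add_slinr_pos g h q k hσ).ne']
  ring

end WMMSE

/-- Proposition 1 (WMMSE equivalence), instantaneous cluster-wise pseudo-SE setup.
For any nonempty set `F` of precoder tuples,
`sup_{q̄∈F} ∑_k w_k log(1 + SLINR_k(q̄)) = ∑_k w_k - inf { J(ρ,u,q̄) }` (in extended reals),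
and `q̄* ∈ F` attains the supremum of the weighted sum pseudo-SE over `F` iff the infimum
of `J` over `F × ℂ^S × (0,∞)^S` is attained at `(ρ*, u*, q̄*)` with
`u*_k = b_k(q̄*)/A_k(q̄*)` and `ρ*_k = 1 + SLINR_k(q̄*)`. -/
theorem wmmse_equivalence (g : S → EuclideanSpace ℂ (Fin n))
    (h : S' → EuclideanSpace ℂ (Fin n)) (σ : ℝ) (hσ : 0 < σ)
    (w : S → ℝ) (hw : ∀ k, 0 < w k)
    (F : Set (S → EuclideanSpace ℂ (Fin n))) (hF : F.Nonempty) :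
    (sSup ((fun q => (((∑ k, w k * Real.log (1 + slinr g h σ q k)) : ℝ) : EReal)) '' F) =
      (((∑ k, w k) : ℝ) : EReal) -
        sInf {x : EReal | ∃ q ∈ F, ∃ u : S → ℂ, ∃ ρ : S → ℝ,
          (∀ k, 0 < ρ k) ∧ x = ((Jobj g h σ w ρ u q : ℝ) : EReal)}) ∧
    ∀ qstar ∈ F,
      ((∀ q ∈ F, (∑ k, w k * Real.log (1 + slinr g h σ q k)) ≤
          ∑ k, w k * Real.log (1 + slinr g h σ qstar k)) ↔
        (∀ q ∈ F, ∀ u : S → ℂ, ∀ ρ : S → ℝ, (∀ k, 0 < ρ k) →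
          Jobj g h σ w (fun k => 1 + slinr g h σ qstar k)
              (fun k => bCoef g qstar k / ((Apow g h σ qstar k : ℝ) : ℂ)) qstar ≤
            Jobj g h σ w ρ u q)) := by
  have hlow : ∀ q u (ρ : S → ℝ), (∀ k, 0 < ρ k) →
      ∑ k, w k - ∑ k, w k * Real.log (1 + slinr g h σ q k) ≤ Jobj g h σ w ρ u q :=
    fun q u ρ hρ => sub_sum_log_one_add_slinr_le_Jobj g h q hσ (fun k => (hw k).le) u hρ
  have hopt := fun q => Jobj_at_optimum g h q hσ w
  refine ⟨EReal.sSup_image_coe_eq_sub_sInf hF _ _ ?_ ?_, fun qstar _ => ⟨?_, ?_⟩⟩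
  · intro q hq
    exact ⟨q, hq, _, _, (one_add_slinr_pos g h q · hσ), by rw [hopt]⟩
  · rintro _ ⟨q, hq, u, ρ, hρ, rfl⟩
    exact ⟨q, hq, EReal.coe_le_coe_iff.2 (hlow q u ρ hρ)⟩
  · intro hmax q hq u ρ hρ
    rw [hopt]
    linarith [hmax q hq, hlow q u ρ hρ]
  · intro hJ q hq
    have := hJ q hq (fun k => bCoef g q k / Apow g h σ q k) _ (one_add_slinr_pos g h q · hσ)
    rw [hopt, hopt] at this
    linarith

end
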